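/- Let f be a piecewise contracting map on a compact locally connected metric space with attractor Λ. If Δ = ∅ or d(Λ, Δ) > 0, then Λ is a finite union of periodic orbits of f; in particular Λ is a finite set and every point of Λ is a periodic point of f. -/

import Mathlib

open Metric Filter Set

/-- One application of the transformation `F_i(A) = closure (f(A ∩ X_i))`. -/
def atomStep {X : Type*} [MetricSpace X] (f : X → X) (P : Set X) (A : Set X) : Set X :=
  closure (f '' (A ∩ P))

/-- The atom with itinerary `l = (i₁, …, iₙ)`: `F_{iₙ} ∘ ⋯ ∘ F_{i₁}(X)`. -/
def atomOf {X : Type*} [MetricSpace X] {N : ℕ} (f : X → X) (P : Fin N → Set X)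
    (l : List (Fin N)) : Set X :=
  l.foldl (fun A i => atomStep f (P i) A) Set.univ

/-- `Λₙ`: the union of all atoms of generation `n`. -/
def LamN {X : Type*} [MetricSpace X] {N : ℕ} (f : X → X) (P : Fin N → Set X) (n : ℕ) : Set X :=
  ⋃ l ∈ {l : List (Fin N) | l.length = n}, atomOf f P l

/-- The attractor `Λ = ⋂_{n ≥ 1} Λₙ`. -/
def Lam {X : Type*} [MetricSpace X] {N : ℕ} (f : X → X) (P : Fin N → Set X) : Set X :=
  ⋂ n ∈ {n : ℕ | 1 ≤ n}, LamN f P n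

/-- `X̃ = ⋂ₙ f⁻ⁿ(X \ Δ)` where `X \ Δ = ⋃ᵢ Xᵢ`. -/
def tildeSet {X : Type*} {N : ℕ} (f : X → X) (P : Fin N → Set X) : Set X :=
  ⋂ n : ℕ, f^[n] ⁻¹' (⋃ i, P i)

/-- A point is non-wandering if orbits of `X̃`-points in each ball return to it
at arbitrarily large times. -/
def nonwandering {X : Type*} [MetricSpace X] {N : ℕ} (f : X → X) (P : Fin N → Set X)
    (x : X) : Prop :=
  ∀ ε > 0, ∀ m : ℕ, ∃ n ≥ m, (f^[n] '' (ball x ε ∩ tildeSet f P) ∩ ball x ε).Nonempty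

/-- The ω-limit set of a point. -/
def omegaSet {X : Type*} [MetricSpace X] (f : X → X) (x : X) : Set X :=
  {y | MapClusterPt y atTop fun n : ℕ => f^[n] x}

/-- The limit set `L`. -/
def limitSet {X : Type*} [MetricSpace X] {N : ℕ} (f : X → X) (P : Fin N → Set X) : Set X :=
  closure (⋃ x ∈ tildeSet f P, omegaSet f x)

section Aux

variable {X : Type*} [MetricSpace X] {N : ℕ} (f : X → X) (P : Fin N → Set X)

lemma atomOf_concat (l : List (Fin N)) (i : Fin N) :
    atomOf f P (l ++ [i]) = atomStep f (P i) (atomOf f P l) := by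
  simp [atomOf, List.foldl_append]

lemma isClosed_atomOf (l : List (Fin N)) : IsClosed (atomOf f P l) := by
  rcases List.eq_nil_or_concat l with rfl | ⟨l', i, rfl⟩
  · exact isClosed_univ
  · rw [List.concat_eq_append, atomOf_concat]; exact isClosed_closure

lemma atom_foldl_mono {A B : Set X} (h : A ⊆ B) (l : List (Fin N)) :
    l.foldl (fun A i => atomStep f (P i) A) A ⊆ l.foldl (fun A i => atomStep f (P i) A) B := by
  induction l generalizing A B with
  | nil => exact h
  | cons i l ih =>
      exact ih (closure_mono (Set.image_mono (Set.inter_subset_inter_left _ h)))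

lemma atomOf_cons_subset (i : Fin N) (l : List (Fin N)) :
    atomOf f P (i :: l) ⊆ atomOf f P l :=
  atom_foldl_mono f P (Set.subset_univ _) l

lemma LamN_succ_subset (n : ℕ) : LamN f P (n + 1) ⊆ LamN f P n := by
  intro x hx
  simp only [LamN, Set.mem_iUnion, Set.mem_setOf_eq, exists_prop] at hx ⊢
  obtain ⟨l, hl, hx⟩ := hx
  cases l with
  | nil => simp at hl
  | cons i l' => exact ⟨l', by simpa using hl, atomOf_cons_subset f P i l' hx⟩

lemma LamN_antitone : Antitone (LamN f P) := by
  apply antitone_nat_of_succ_le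
  exact fun n => LamN_succ_subset f P n

lemma isClosed_LamN (n : ℕ) : IsClosed (LamN f P n) := by
  apply Set.Finite.isClosed_biUnion (List.finite_length_eq _ n)
  exact fun l _ => isClosed_atomOf f P l

lemma Lam_eq_iInter : Lam f P = ⋂ n : ℕ, LamN f P (n + 1) := by
  ext x
  simp only [Lam, Set.mem_iInter, Set.mem_setOf_eq]
  constructor
  · exact fun h n => h (n + 1) (by omega)
  · intro h n hn
    obtain ⟨m, rfl⟩ : ∃ m, n = m + 1 := ⟨n - 1, by omega⟩
    exact h m

lemma LamN_nonempty {x : X} (hx : x ∈ tildeSet f P) (n : ℕ) : (LamN f P n).Nonempty := by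
  have key : ∀ n : ℕ, ∃ l : List (Fin N), l.length = n ∧ f^[n] x ∈ atomOf f P l := by
    intro n
    induction n with
    | zero => exact ⟨[], rfl, Set.mem_univ _⟩
    | succ n ih =>
        obtain ⟨l, hl, hm⟩ := ih
        have hxn : f^[n] x ∈ ⋃ i, P i := Set.mem_iInter.1 hx n
        obtain ⟨i, hi⟩ := Set.mem_iUnion.1 hxn
        refine ⟨l ++ [i], by simp [hl], ?_⟩
        rw [atomOf_concat, Function.iterate_succ_apply']
        exact subset_closure ⟨f^[n] x, ⟨hm, hi⟩, rfl⟩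
  obtain ⟨l, hl, hm⟩ := key n
  exact ⟨f^[n] x, Set.mem_biUnion hl hm⟩

end Aux

/-- If `Δ = ∅` or `d(Λ, Δ) > 0`, then the attractor is a finite union of periodic
orbits: it is finite and each of its points is periodic. -/
theorem attractor_finite_periodic {X : Type*} [MetricSpace X] [CompactSpace X] [LocallyConnectedSpace X] {N : ℕ}
    (f : X → X) (P : Fin N → Set X) (lam : ℝ)
    (hN : 2 ≤ N)
    (hne : ∀ i, (P i).Nonempty)
    (hop : ∀ i, IsOpen (P i))
    (hdisj : ∀ i j, i ≠ j → Disjoint (P i) (P j))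
    (hcov : (⋃ i, closure (P i)) = Set.univ)
    (hlam0 : 0 < lam) (hlam1 : lam < 1)
    (hctr : ∀ i, ∀ x ∈ P i, ∀ y ∈ P i, dist (f x) (f y) ≤ lam * dist x y)
    (htilde : (tildeSet f P).Nonempty)
    (hsep : (Set.univ \ ⋃ i, P i) = (∅ : Set X) ∨
      ∃ δ > 0, ∀ a ∈ Lam f P, ∀ b ∈ (Set.univ \ ⋃ i, P i), δ ≤ dist a b) :
    (Lam f P).Finite ∧ ∀ x ∈ Lam f P, ∃ p : ℕ, 1 ≤ p ∧ f^[p] x = x := by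
  classical
  set Λ := Lam f P with hΛdef
  have hiter : Λ = ⋂ n : ℕ, LamN f P (n + 1) := Lam_eq_iInter f P
  have hΛclosed : IsClosed Λ := by
    rw [hiter]; exact isClosed_iInter fun n => isClosed_LamN f P (n + 1)
  have hΛcomp : IsCompact Λ := hΛclosed.isCompact
  -- Λ is nonempty
  obtain ⟨x₀, hx₀⟩ := htilde
  have hΛne : Λ.Nonempty := by
    rw [hiter]
    apply IsCompact.nonempty_iInter_of_sequence_nonempty_isCompact_isClosed
    · exact fun n => LamN_succ_subset f P (n + 1)
    · exact fun n => LamN_nonempty f P hx₀ (n + 1)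
    · exact (isClosed_LamN f P 1).isCompact
    · exact fun n => isClosed_LamN f P (n + 1)
  -- Λ avoids Δ
  have hΛU : Λ ⊆ ⋃ i, P i := by
    rcases hsep with h | ⟨δ, hδ, h⟩
    · intro a _
      by_contra hx
      have : a ∈ Set.univ \ ⋃ i, P i := ⟨Set.mem_univ a, hx⟩
      rw [h] at this
      exact this
    · intro a ha
      by_contra hx
      have := h a ha a ⟨Set.mem_univ a, hx⟩
      simp only [dist_self] at this
      linarith
  -- Lebesgue number
  obtain ⟨ρ, hρ0, hρ⟩ := lebesgue_number_lemma_of_metric hΛcomp hop hΛU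
  -- local contraction near Λ
  have hctr₂ : ∀ a ∈ Λ, ∀ x : X, dist x a < ρ → dist (f x) (f a) ≤ lam * dist x a := by
    intro a ha x hx
    obtain ⟨i, hi⟩ := hρ a ha
    exact hctr i x (hi (mem_ball.2 hx)) a (hi (mem_ball_self hρ0))
  -- f maps Λ into Λ
  have hmaps : Set.MapsTo f Λ Λ := by
    intro a ha
    obtain ⟨i, hi⟩ := Set.mem_iUnion.1 (hΛU ha)
    rw [hiter] at ha ⊢
    rw [Set.mem_iInter] at ha ⊢
    intro n
    have han : a ∈ LamN f P (n + 1) := ha n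
    simp only [LamN, Set.mem_iUnion, Set.mem_setOf_eq, exists_prop] at han
    obtain ⟨l, hl, hal⟩ := han
    have : f a ∈ atomOf f P (l ++ [i]) := by
      rw [atomOf_concat]
      exact subset_closure ⟨a, ⟨hal, hi⟩, rfl⟩
    have h2 : f a ∈ LamN f P (n + 2) := Set.mem_biUnion (by simp [hl]) this
    exact LamN_succ_subset f P (n + 1) h2
  -- f is continuous on Λ
  have hcont : ContinuousOn f Λ := by
    intro a ha
    apply ContinuousAt.continuousWithinAt
    rw [Metric.continuousAt_iff]
    intro ε hε
    refine ⟨min ρ (ε / lam), by positivity, fun {x} hx => ?_⟩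
    have h1 : dist x a < ρ := lt_of_lt_of_le hx (min_le_left _ _)
    calc dist (f x) (f a) ≤ lam * dist x a := hctr₂ a ha x h1
      _ < lam * (ε / lam) := by
          apply mul_lt_mul_of_pos_left _ hlam0
          exact lt_of_lt_of_le hx (min_le_right _ _)
      _ = ε := by field_simp
  have hKclosed : IsClosed (f '' Λ) := (hΛcomp.image_of_continuousOn hcont).isClosed
  -- approximation of LamN by Λ
  have happrox : ∀ ε > (0:ℝ), ∃ n₀ : ℕ, ∀ x ∈ LamN f P (n₀ + 1), ∃ a ∈ Λ, dist x a < ε := by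
    intro ε hε
    by_contra hcon
    push_neg at hcon
    set C : ℕ → Set X := fun n => LamN f P (n + 1) ∩ {x | ε ≤ infDist x Λ} with hC
    have hCclosed : ∀ n, IsClosed (C n) :=
      fun n => (isClosed_LamN f P (n + 1)).inter
        (isClosed_le continuous_const (continuous_infDist_pt Λ))
    have hCne : ∀ n, (C n).Nonempty := by
      intro n
      obtain ⟨x, hx1, hx2⟩ := hcon n
      refine ⟨x, hx1, ?_⟩
      simp only [Set.mem_setOf_eq]
      by_contra hlt
      push_neg at hlt
      obtain ⟨a, ha, hd⟩ := (Metric.infDist_lt_iff hΛne).1 hlt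
      exact absurd hd (not_lt.2 (hx2 a ha))
    have : (⋂ n, C n).Nonempty := by
      apply IsCompact.nonempty_iInter_of_sequence_nonempty_isCompact_isClosed
      · exact fun n => Set.inter_subset_inter_left _ (LamN_succ_subset f P (n + 1))
      · exact hCne
      · exact (hCclosed 0).isCompact
      · exact hCclosed
    obtain ⟨x, hx⟩ := this
    rw [Set.mem_iInter] at hx
    have hxΛ : x ∈ Λ := by
      rw [hiter, Set.mem_iInter]; exact fun n => (hx n).1
    have : ε ≤ infDist x Λ := (hx 0).2
    rw [infDist_zero_of_mem hxΛ] at this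
    linarith
  -- surjectivity: Λ ⊆ f '' Λ
  have hsurj : Λ ⊆ f '' Λ := by
    intro y hy
    have : y ∈ closure (f '' Λ) := by
      rw [Metric.mem_closure_iff]
      intro ε hε
      set ε₁ := min (ε / 2) (ρ / 2) with hε₁
      have hε₁0 : 0 < ε₁ := by positivity
      obtain ⟨n₀, hn₀⟩ := happrox ε₁ hε₁0
      have hyn : y ∈ LamN f P (n₀ + 2) := by
        rw [hiter, Set.mem_iInter] at hy
        exact hy (n₀ + 1)
      simp only [LamN, Set.mem_iUnion, Set.mem_setOf_eq, exists_prop] at hyn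
      obtain ⟨l, hl, hyl⟩ := hyn
      rcases List.eq_nil_or_concat l with rfl | ⟨l', j, rfl⟩
      · simp at hl
      · rw [List.concat_eq_append, atomOf_concat] at hyl
        obtain ⟨z, hz, hdz⟩ := Metric.mem_closure_iff.1 hyl (ε / 2) (by positivity)
        obtain ⟨x, ⟨hxA, hxj⟩, rfl⟩ := hz
        have hxL : x ∈ LamN f P (n₀ + 1) := by
          apply Set.mem_biUnion (show l' ∈ {l : List (Fin N) | l.length = n₀ + 1} by
            simp only [Set.mem_setOf_eq]
            have := hl; simp only [List.concat_eq_append, List.length_append,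
              List.length_cons, List.length_nil] at this
            omega) hxA
        obtain ⟨a, ha, hda⟩ := hn₀ x hxL
        have h1 : dist (f x) (f a) ≤ lam * dist x a :=
          hctr₂ a ha x (lt_of_lt_of_le hda (le_trans (min_le_right _ _) (by linarith)))
        refine ⟨f a, ⟨a, ha, rfl⟩, ?_⟩
        have h2 : dist (f x) (f a) < ε / 2 := by
          have : lam * dist x a ≤ dist x a :=
            mul_le_of_le_one_left dist_nonneg hlam1.le
          have h3 : dist x a < ε / 2 := lt_of_lt_of_le hda (min_le_left _ _)
          linarith
        calc dist y (f a) ≤ dist y (f x) + dist (f x) (f a) := dist_triangle _ _ _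
          _ < ε / 2 + ε / 2 := add_lt_add hdz h2
          _ = ε := by ring
    rwa [hKclosed.closure_eq] at this
  -- nets
  obtain ⟨t0, ht0Λ, ht0fin, ht0cov⟩ := finite_cover_balls_of_compact hΛcomp (show (0:ℝ) < ρ / 2 by positivity)
  set m := ht0fin.toFinset.card with hm
  have hnet : ∀ k : ℕ, ∃ s : Finset X, ↑s ⊆ Λ ∧ s.card ≤ m ∧
      ∀ y ∈ Λ, ∃ z ∈ s, dist y z < lam ^ k * (ρ / 2) := by
    intro k
    induction k with
    | zero =>
        refine ⟨ht0fin.toFinset, by rwa [ht0fin.coe_toFinset], le_refl _, ?_⟩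
        intro y hy
        obtain ⟨z, hz, hyz⟩ := Set.mem_iUnion₂.1 (ht0cov hy)
        exact ⟨z, ht0fin.mem_toFinset.2 hz, by simpa using hyz⟩
    | succ k ih =>
        obtain ⟨s, hsΛ, hscard, hscov⟩ := ih
        refine ⟨s.image f, ?_, le_trans (Finset.card_image_le) hscard, ?_⟩
        · intro z hz
          obtain ⟨w, hw, rfl⟩ := Finset.mem_image.1 hz
          exact hmaps (hsΛ hw)
        · intro y hy
          obtain ⟨a, ha, rfl⟩ := hsurj hy
          obtain ⟨z, hz, hdz⟩ := hscov a ha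
          have hpow : lam ^ k ≤ 1 := pow_le_one₀ hlam0.le hlam1.le
          have hlt : dist a z < ρ := by
            have : lam ^ k * (ρ / 2) ≤ ρ / 2 := by nlinarith
            linarith
          have h1 : dist (f a) (f z) ≤ lam * dist a z := by
            rw [dist_comm a z] at hlt
            rw [dist_comm (f a) (f z), dist_comm a z]
            exact hctr₂ a ha z hlt
          refine ⟨f z, Finset.mem_image_of_mem f hz, ?_⟩
          calc dist (f a) (f z) ≤ lam * dist a z := h1
            _ < lam * (lam ^ k * (ρ / 2)) := by
                exact mul_lt_mul_of_pos_left hdz hlam0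
            _ = lam ^ (k + 1) * (ρ / 2) := by ring
  -- finiteness
  have hfin : Λ.Finite := by
    by_contra hinf
    rw [← Set.not_infinite, not_not] at hinf
    obtain ⟨t, htΛ, htcard⟩ := hinf.exists_subset_card_eq (m + 2)
    set pairs := (t ×ˢ t).filter (fun p : X × X => p.1 ≠ p.2) with hpairs
    have hpne : pairs.Nonempty := by
      obtain ⟨a, ha, b, hb, hab⟩ := Finset.one_lt_card.1 (by omega : 1 < t.card)
      exact ⟨(a, b), Finset.mem_filter.2 ⟨Finset.mem_product.2 ⟨ha, hb⟩, hab⟩⟩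
    set d := pairs.inf' hpne (fun p => dist p.1 p.2) with hd
    have hd0 : 0 < d := by
      rw [hd, Finset.lt_inf'_iff]
      intro p hp
      exact dist_pos.2 (Finset.mem_filter.1 hp).2
    obtain ⟨k, hk⟩ := exists_pow_lt_of_lt_one (show (0:ℝ) < d / ρ by positivity) hlam1
    have hkd : lam ^ k * (ρ / 2) < d / 2 := by
      have := mul_lt_mul_of_pos_right hk (show (0:ℝ) < ρ / 2 by positivity)
      calc lam ^ k * (ρ / 2) < d / ρ * (ρ / 2) := this
        _ = d / 2 := by field_simp
    obtain ⟨s, hsΛ, hscard, hscov⟩ := hnet k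
    have hg : ∀ x : X, ∃ z : X, x ∈ t → z ∈ s ∧ dist x z < lam ^ k * (ρ / 2) := by
      intro x
      by_cases hx : x ∈ t
      · obtain ⟨z, hz, hdz⟩ := hscov x (htΛ hx)
        exact ⟨z, fun _ => ⟨hz, hdz⟩⟩
      · exact ⟨x, fun h => absurd h hx⟩
    choose g hgp using hg
    have hmapsto : ∀ x ∈ t, g x ∈ s := fun x hx => (hgp x hx).1
    obtain ⟨x, hx, y, hy, hxy, hgxy⟩ :=
      Finset.exists_ne_map_eq_of_card_lt_of_maps_to
        (show s.card < t.card by omega) hmapsto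
    have hdxy : d ≤ dist x y := by
      have hmem : (x, y) ∈ pairs :=
        Finset.mem_filter.2 ⟨Finset.mem_product.2 ⟨hx, hy⟩, hxy⟩
      exact Finset.inf'_le (fun p : X × X => dist p.1 p.2) hmem
    have h1 : dist x (g x) < lam ^ k * (ρ / 2) := (hgp x hx).2
    have h2 : dist y (g y) < lam ^ k * (ρ / 2) := (hgp y hy).2
    have : dist x y ≤ dist x (g x) + dist (g y) y := by
      rw [hgxy]
      calc dist x y ≤ dist x (g y) + dist (g y) y := dist_triangle _ _ _
        _ = dist x (g y) + dist (g y) y := rfl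
    rw [dist_comm (g y) y] at this
    linarith
  -- periodicity
  have hbij : Set.BijOn f Λ Λ := (hfin.surjOn_iff_bijOn_of_mapsTo hmaps).1 hsurj
  have hmapsn : ∀ n : ℕ, Set.MapsTo f^[n] Λ Λ := fun n => hmaps.iterate n
  have hinjn : ∀ n : ℕ, Set.InjOn f^[n] Λ := by
    intro n
    induction n with
    | zero => simpa using Set.injOn_id Λ
    | succ n ih =>
        rw [Function.iterate_succ']
        exact hbij.injOn.comp ih (hmapsn n)
  refine ⟨hfin, ?_⟩
  intro x hx
  obtain ⟨n, -, m', -, hnm, heq⟩ :=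
    Set.infinite_univ.exists_ne_map_eq_of_mapsTo
      (f := fun n : ℕ => f^[n] x) (fun n _ => hmapsn n hx) hfin
  rcases hnm.lt_or_gt with h | h
  · refine ⟨m' - n, by omega, ?_⟩
    have : f^[n] (f^[m' - n] x) = f^[n] x := by
      rw [← Function.iterate_add_apply]
      have : n + (m' - n) = m' := by omega
      rw [this]
      exact heq.symm
    exact hinjn n (hmapsn (m' - n) hx) hx this
  · refine ⟨n - m', by omega, ?_⟩
    have : f^[m'] (f^[n - m'] x) = f^[m'] x := by
      rw [← Function.iterate_add_apply]
      have : m' + (n - m') = n := by omega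
      rw [this]
      exact heq
    exact hinjn m' (hmapsn (n - m') hx) hx this
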